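/- In an abelian category with enough injectives, let (M^k, τ^k : M^k → M^{k+1})_{k≥0} be an acyclic cochain complex whose only nontrivial cohomology is M (in degree 0), and for each k let I^k be an injective object containing M^k with quotient projection p^k : I^k → I^k/M^k. Then there exist morphisms θ^k : I^k → I^{k+1}, δ^k : I^k/M^k → I^{k+2}, and ω^k : I^k/M^k → I^{k+1}/M^{k+1} such that the sequence 0 → M → I^0 → I^1 ⊕ (I^0/M^0) → I^2 ⊕ (I^1/M^1) → ⋯, with differentials given by the matrices (θ^0; p^0) and ((θ^k, δ^{k-1}); (p^k, ω^{k-1})), is exact. -/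
import Mathlib


open CategoryTheory Limits
open CategoryTheory.Preadditive

/-- (Pseudo-hyperresolution lemma.) In an abelian category with enough
injectives, given an acyclic cochain complex `(M^k, τ^k)` whose only nontrivial cohomology is
`M` (in degree 0), and injective objects `I^k` containing `M^k` with quotient projections
`p^k = cokernel.π (i k) : I^k → I^k/M^k`, there exist `θ^k : I^k ⟶ I^{k+1}`,
`δ^k : I^k/M^k ⟶ I^{k+2}` and `ω^k : I^k/M^k ⟶ I^{k+1}/M^{k+1}` such that the sequence
`0 → M → I^0 → I^1 ⊕ I^0/M^0 → I^2 ⊕ I^1/M^1 → ⋯`, with differentials the matrices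
`(θ^0; p^0)` and `((θ^{k+1}, δ^k); (p^{k+1}, ω^k))`, is exact. -/
theorem stmt1 {C : Type*} [Category C] [Abelian C] [EnoughInjectives C]
    (M : C) (Mo : ℕ → C) (τ : ∀ k, Mo k ⟶ Mo (k + 1))
    (ι : M ⟶ Mo 0) (hι : Mono ι)
    (w0 : ι ≫ τ 0 = 0) (h0 : (ShortComplex.mk ι (τ 0) w0).Exact)
    (wk : ∀ k, τ k ≫ τ (k + 1) = 0)
    (hk : ∀ k, (ShortComplex.mk (τ k) (τ (k + 1)) (wk k)).Exact)
    (I : ℕ → C) (hInj : ∀ k, Injective (I k))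
    (i : ∀ k, Mo k ⟶ I k) (hi : ∀ k, Mono (i k)) :
    ∃ (θ : ∀ k, I k ⟶ I (k + 1))
      (δ : ∀ k, cokernel (i k) ⟶ I (k + 2))
      (ω : ∀ k, cokernel (i k) ⟶ cokernel (i (k + 1))),
      letI d0 : I 0 ⟶ I 1 ⊞ cokernel (i 0) := biprod.lift (θ 0) (cokernel.π (i 0))
      letI D : ∀ k, (I (k + 1) ⊞ cokernel (i k)) ⟶ (I (k + 2) ⊞ cokernel (i (k + 1))) :=
        fun k => biprod.desc (biprod.lift (θ (k + 1)) (cokernel.π (i (k + 1))))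
          (biprod.lift (δ k) (ω k))
      Mono (ι ≫ i 0) ∧
      (∃ w : (ι ≫ i 0) ≫ d0 = 0, (ShortComplex.mk (ι ≫ i 0) d0 w).Exact) ∧
      (∃ w : d0 ≫ D 0 = 0, (ShortComplex.mk d0 (D 0) w).Exact) ∧
      (∀ k, ∃ w : D k ≫ D (k + 1) = 0, (ShortComplex.mk (D k) (D (k + 1)) w).Exact) := by
  haveI := hInj
  haveI := hi
  haveI := hι
  -- θ k : I k ⟶ I (k+1) extending τ k
  set θ : ∀ k, I k ⟶ I (k + 1) := fun k => Injective.factorThru (τ k ≫ i (k + 1)) (i k)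
    with hθdef
  have hθ : ∀ k, i k ≫ θ k = τ k ≫ i (k + 1) := fun k => Injective.comp_factorThru _ _
  have hθθ : ∀ k, i k ≫ (θ k ≫ θ (k + 1)) = 0 := by
    intro k
    rw [← Category.assoc, hθ k, Category.assoc, hθ (k + 1), ← Category.assoc, wk k,
      zero_comp]
  have hθp : ∀ k, i k ≫ (θ k ≫ cokernel.π (i (k + 1))) = 0 := by
    intro k
    rw [← Category.assoc, hθ k, Category.assoc, cokernel.condition, comp_zero]
  set δ : ∀ k, cokernel (i k) ⟶ I (k + 2) := fun k =>
    cokernel.desc (i k) (-(θ k ≫ θ (k + 1))) (by rw [comp_neg, hθθ k, neg_zero]) with hδdef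
  set ω : ∀ k, cokernel (i k) ⟶ cokernel (i (k + 1)) := fun k =>
    cokernel.desc (i k) (-(θ k ≫ cokernel.π (i (k + 1))))
      (by rw [comp_neg, hθp k, neg_zero]) with hωdef
  have hδ : ∀ k, cokernel.π (i k) ≫ δ k = -(θ k ≫ θ (k + 1)) := fun k => cokernel.π_desc _ _ _
  have hω : ∀ k, cokernel.π (i k) ≫ ω k = -(θ k ≫ cokernel.π (i (k + 1))) := fun k =>
    cokernel.π_desc _ _ _
  -- the central diagram chase, shared by the last two exactness statements
  have key : ∀ (a : ℕ) ⦃A : C⦄ (x : A ⟶ I (a + 1)) (y : A ⟶ cokernel (i a)),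
      x ≫ θ (a + 1) + y ≫ δ a = 0 → x ≫ cokernel.π (i (a + 1)) + y ≫ ω a = 0 →
      ∃ (A' : C) (π' : A' ⟶ A) (_ : Epi π') (v : A' ⟶ I a),
        v ≫ θ a = π' ≫ x ∧ v ≫ cokernel.π (i a) = π' ≫ y := by
    intro a A x y e1 e2
    obtain ⟨A₁, π₁, hπ₁, u, hu⟩ := surjective_up_to_refinements_of_epi (cokernel.π (i a)) y
    have h2 : x ≫ cokernel.π (i (a + 1)) = -(y ≫ ω a) := by
      rw [eq_neg_iff_add_eq_zero]; exact e2
    have hx'p : (π₁ ≫ x - u ≫ θ a) ≫ cokernel.π (i (a + 1)) = 0 := by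
      rw [sub_comp, Category.assoc, Category.assoc, h2, comp_neg, ← Category.assoc, hu,
        Category.assoc, hω a, comp_neg, ← Category.assoc, neg_neg, sub_eq_zero]
    obtain ⟨m, hm⟩ : ∃ m : A₁ ⟶ Mo (a + 1), m ≫ i (a + 1) = π₁ ≫ x - u ≫ θ a :=
      ⟨Abelian.monoLift (i (a + 1)) _ hx'p, Abelian.monoLift_comp _ _ _⟩
    have h1 : x ≫ θ (a + 1) = -(y ≫ δ a) := by
      rw [eq_neg_iff_add_eq_zero]; exact e1
    have hmτ : m ≫ τ (a + 1) = 0 := by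
      rw [← cancel_mono (i (a + 2)), Category.assoc, ← hθ (a + 1), ← Category.assoc, hm,
        zero_comp, sub_comp, Category.assoc, Category.assoc, h1, comp_neg, ← Category.assoc,
        hu, Category.assoc, hδ a, comp_neg, ← Category.assoc, neg_neg, sub_eq_zero]
    obtain ⟨A₂, π₂, hπ₂, n, hn⟩ := (hk a).exact_up_to_refinements m hmτ
    dsimp at hn
    refine ⟨A₂, π₂ ≫ π₁, epi_comp _ _, π₂ ≫ u + n ≫ i a, ?_, ?_⟩
    · rw [add_comp, Category.assoc, Category.assoc, hθ a, ← Category.assoc n, ← hn,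
        Category.assoc, hm, comp_sub, ← Category.assoc, ← Category.assoc]
      abel
    · simp only [Category.assoc, cokernel.condition, comp_zero, add_comp, add_zero, ← hu]
  refine ⟨θ, δ, ω, ?_, ?_, ?_, ?_⟩
  · exact mono_comp ι (i 0)
  · -- exactness at I 0
    have w : (ι ≫ i 0) ≫ biprod.lift (θ 0) (cokernel.π (i 0)) = 0 := by
      apply biprod.hom_ext
      · rw [Category.assoc, biprod.lift_fst, Category.assoc, hθ 0, ← Category.assoc, w0,
          zero_comp, zero_comp]
      · rw [Category.assoc, biprod.lift_snd, Category.assoc, cokernel.condition, comp_zero,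
          zero_comp]
    refine ⟨w, ?_⟩
    rw [ShortComplex.exact_iff_exact_up_to_refinements]
    intro A x hx
    dsimp at x hx ⊢
    have hx1 : x ≫ θ 0 = 0 := by
      have := hx =≫ biprod.fst; simpa [Category.assoc] using this
    have hx2 : x ≫ cokernel.π (i 0) = 0 := by
      have := hx =≫ biprod.snd; simpa [Category.assoc] using this
    obtain ⟨m, hm⟩ : ∃ m : A ⟶ Mo 0, m ≫ i 0 = x :=
      ⟨Abelian.monoLift (i 0) x hx2, Abelian.monoLift_comp _ _ _⟩
    have hmτ : m ≫ τ 0 = 0 := by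
      rw [← cancel_mono (i 1), Category.assoc, ← hθ 0, ← Category.assoc, hm, hx1, zero_comp]
    obtain ⟨A', π', hπ', n, hn⟩ := h0.exact_up_to_refinements m hmτ
    refine ⟨A', π', hπ', n, ?_⟩
    dsimp at hn ⊢
    rw [← hm, ← Category.assoc, hn, Category.assoc]
  · -- exactness at I 1 ⊞ cokernel (i 0)
    have w : biprod.lift (θ 0) (cokernel.π (i 0)) ≫
        biprod.desc (biprod.lift (θ 1) (cokernel.π (i 1))) (biprod.lift (δ 0) (ω 0)) = 0 := by
      rw [biprod.lift_desc]
      apply biprod.hom_ext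
      · simp only [add_comp, Category.assoc, biprod.lift_fst, zero_comp]
        rw [hδ 0]
        simp
      · simp only [add_comp, Category.assoc, biprod.lift_snd, zero_comp]
        rw [hω 0]
        simp
    refine ⟨w, ?_⟩
    rw [ShortComplex.exact_iff_exact_up_to_refinements]
    intro A x₂ hx₂
    dsimp at x₂ hx₂ ⊢
    set x : A ⟶ I 1 := x₂ ≫ biprod.fst with hxdef
    set y : A ⟶ cokernel (i 0) := x₂ ≫ biprod.snd with hydef
    have hx₂' : x₂ = biprod.lift x y := by apply biprod.hom_ext <;> simp [hxdef, hydef]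
    rw [hx₂', biprod.lift_desc] at hx₂
    have e1 : x ≫ θ 1 + y ≫ δ 0 = 0 := by
      have := hx₂ =≫ biprod.fst; simpa [Category.assoc] using this
    have e2 : x ≫ cokernel.π (i 1) + y ≫ ω 0 = 0 := by
      have := hx₂ =≫ biprod.snd; simpa [Category.assoc] using this
    obtain ⟨A', π', hπ', v, hv1, hv2⟩ := key 0 x y e1 e2
    refine ⟨A', π', hπ', v, ?_⟩
    rw [hx₂']
    apply biprod.hom_ext
    · simpa [Category.assoc] using hv1.symm
    · simpa [Category.assoc] using hv2.symm
  · -- exactness at I (k+2) ⊞ cokernel (i (k+1))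
    intro k
    have w : biprod.desc (biprod.lift (θ (k + 1)) (cokernel.π (i (k + 1))))
          (biprod.lift (δ k) (ω k)) ≫
        biprod.desc (biprod.lift (θ (k + 2)) (cokernel.π (i (k + 2))))
          (biprod.lift (δ (k + 1)) (ω (k + 1))) = 0 := by
      apply biprod.hom_ext'
      · rw [← Category.assoc, biprod.inl_desc, biprod.lift_desc, comp_zero]
        apply biprod.hom_ext
        · simp only [add_comp, Category.assoc, biprod.lift_fst, zero_comp]
          rw [hδ (k + 1)]
          simp
        · simp only [add_comp, Category.assoc, biprod.lift_snd, zero_comp]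
          rw [hω (k + 1)]
          simp
      · rw [← Category.assoc, biprod.inr_desc, biprod.lift_desc, comp_zero]
        apply biprod.hom_ext
        · rw [← cancel_epi (cokernel.π (i k))]
          simp only [comp_add, add_comp, Category.assoc, biprod.lift_fst, comp_zero, zero_comp]
          rw [reassoc_of% (hδ k), reassoc_of% (hω k)]
          simp only [neg_comp, Category.assoc, hδ (k + 1), comp_neg, neg_neg]
          abel
        · rw [← cancel_epi (cokernel.π (i k))]
          simp only [comp_add, add_comp, Category.assoc, biprod.lift_snd, comp_zero, zero_comp]
          rw [reassoc_of% (hδ k), reassoc_of% (hω k)]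
          simp only [neg_comp, Category.assoc, hω (k + 1), comp_neg, neg_neg]
          abel
    refine ⟨w, ?_⟩
    rw [ShortComplex.exact_iff_exact_up_to_refinements]
    intro A x₂ hx₂
    dsimp at x₂ hx₂ ⊢
    set x : A ⟶ I (k + 2) := x₂ ≫ biprod.fst with hxdef
    set y : A ⟶ cokernel (i (k + 1)) := x₂ ≫ biprod.snd with hydef
    have hx₂' : x₂ = biprod.lift x y := by apply biprod.hom_ext <;> simp [hxdef, hydef]
    rw [hx₂', biprod.lift_desc] at hx₂
    have e1 : x ≫ θ (k + 2) + y ≫ δ (k + 1) = 0 := by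
      have := hx₂ =≫ biprod.fst; simpa [Category.assoc] using this
    have e2 : x ≫ cokernel.π (i (k + 2)) + y ≫ ω (k + 1) = 0 := by
      have := hx₂ =≫ biprod.snd; simpa [Category.assoc] using this
    obtain ⟨A', π', hπ', v, hv1, hv2⟩ := key (k + 1) x y e1 e2
    refine ⟨A', π', hπ', v ≫ biprod.inl, ?_⟩
    rw [hx₂', Category.assoc, biprod.inl_desc]
    apply biprod.hom_ext
    · simpa [Category.assoc] using hv1.symm
    · simpa [Category.assoc] using hv2.symm
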